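/- arXiv:1208.2728 — 4 statements merged into one kernel-verified Lean document; each statement's English description precedes it below -/
import Mathlib

section
/- Let u : ℝ³ → ℝ be a smooth function of (x, y, t) satisfying the dKP equation u_{xt} = (u u_x)_x + u_{yy}. Then the vector fields X = ∂_y − λ ∂_x + u_x ∂_λ and Y = ∂_t − (λ² + u) ∂_x + (u_x λ + u_y) ∂_λ on the extended space ℝ⁴ with coordinates (x, y, t, λ) commute: [X, Y] = 0. -/
noncomputable def pd {n : ℕ} (i : Fin n) (f : (Fin n → ℝ) → ℝ) (p : Fin n → ℝ) : ℝ :=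
  fderiv ℝ f p (Pi.single i 1)

noncomputable def lieBracket {n : ℕ} (X Y : (Fin n → ℝ) → (Fin n → ℝ)) (p : Fin n → ℝ) :
    Fin n → ℝ :=
  fun i => (∑ j, X p j * pd j (fun q => Y q i) p) - (∑ j, Y p j * pd j (fun q => X q i) p)

namespace DKPaux

noncomputable def L34 : (Fin 4 → ℝ) →L[ℝ] (Fin 3 → ℝ) :=
  ContinuousLinearMap.pi fun i => ContinuousLinearMap.proj (Fin.castSucc i)

lemma L34_apply (p : Fin 4 → ℝ) : L34 p = ![p 0, p 1, p 2] := by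
  funext i; fin_cases i <;> rfl

lemma pd_const {n : ℕ} (c : ℝ) (j : Fin n) (p : Fin n → ℝ) : pd j (fun _ => c) p = 0 := by
  simp [pd]

lemma pd_proj {n : ℕ} (i j : Fin n) (p : Fin n → ℝ) :
    pd j (fun q => q i) p = (Pi.single j (1:ℝ) : Fin n → ℝ) i := by
  have h : (fun q : Fin n → ℝ => q i) = ⇑(ContinuousLinearMap.proj (R := ℝ)
      (φ := fun _ : Fin n => ℝ) i) := rfl
  rw [pd, h, ContinuousLinearMap.fderiv]
  rfl

lemma pd_neg {n : ℕ} (f : (Fin n → ℝ) → ℝ) (j : Fin n) (p : Fin n → ℝ) :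
    pd j (fun q => -(f q)) p = -(pd j f p) := by
  simp [pd, fderiv_neg]

lemma pd_add {n : ℕ} (f g : (Fin n → ℝ) → ℝ) {p : Fin n → ℝ}
    (hf : DifferentiableAt ℝ f p) (hg : DifferentiableAt ℝ g p) (j : Fin n) :
    pd j (fun q => f q + g q) p = pd j f p + pd j g p := by
  simp [pd, fderiv_fun_add hf hg]

lemma pd_mul {n : ℕ} (f g : (Fin n → ℝ) → ℝ) {p : Fin n → ℝ}
    (hf : DifferentiableAt ℝ f p) (hg : DifferentiableAt ℝ g p) (j : Fin n) :
    pd j (fun q => f q * g q) p = pd j f p * g p + f p * pd j g p := by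
  simp [pd, fderiv_fun_mul hf hg]; ring

lemma diff_comp (f : (Fin 3 → ℝ) → ℝ) (hf : Differentiable ℝ f) :
    Differentiable ℝ (fun q : Fin 4 → ℝ => f ![q 0, q 1, q 2]) := by
  have h1 : (fun q : Fin 4 → ℝ => f ![q 0, q 1, q 2]) = f ∘ L34 := by
    funext q; simp [L34_apply]
  rw [h1]
  exact hf.comp L34.differentiable

lemma diff_proj3 : Differentiable ℝ (fun q : Fin 4 → ℝ => q 3) := by
  have h : (fun q : Fin 4 → ℝ => q 3) = ⇑(ContinuousLinearMap.proj (R := ℝ)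
      (φ := fun _ : Fin 4 => ℝ) 3) := rfl
  rw [h]; exact (ContinuousLinearMap.proj (R := ℝ) (φ := fun _ : Fin 4 => ℝ) 3).differentiable

lemma pd_comp (f : (Fin 3 → ℝ) → ℝ) (hf : Differentiable ℝ f) (j : Fin 4) (p : Fin 4 → ℝ) :
    pd j (fun q => f ![q 0, q 1, q 2]) p
      = fderiv ℝ f ![p 0, p 1, p 2] (L34 (Pi.single j 1)) := by
  have h1 : (fun q : Fin 4 → ℝ => f ![q 0, q 1, q 2]) = f ∘ L34 := by
    funext q; simp [L34_apply]
  rw [pd, h1, fderiv_comp _ (hf _) L34.differentiableAt, L34.fderiv]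
  simp [L34_apply]

lemma L34_single0 : L34 (Pi.single (0 : Fin 4) 1) = Pi.single (0 : Fin 3) 1 := by
  funext i; fin_cases i <;> simp [L34, Pi.single_apply, Fin.ext_iff]

lemma L34_single1 : L34 (Pi.single (1 : Fin 4) 1) = Pi.single (1 : Fin 3) 1 := by
  funext i; fin_cases i <;> simp [L34, Pi.single_apply, Fin.ext_iff]

lemma L34_single2 : L34 (Pi.single (2 : Fin 4) 1) = Pi.single (2 : Fin 3) 1 := by
  funext i; fin_cases i <;> simp [L34, Pi.single_apply, Fin.ext_iff]

lemma L34_single3 : L34 (Pi.single (3 : Fin 4) 1) = 0 := by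
  funext i; fin_cases i <;> simp [L34, Pi.single_apply, Fin.ext_iff] <;> decide

lemma pd_comp0 (f : (Fin 3 → ℝ) → ℝ) (hf : Differentiable ℝ f) (p : Fin 4 → ℝ) :
    pd 0 (fun q => f ![q 0, q 1, q 2]) p = pd 0 f ![p 0, p 1, p 2] := by
  rw [pd_comp f hf, L34_single0]; rfl

lemma pd_comp1 (f : (Fin 3 → ℝ) → ℝ) (hf : Differentiable ℝ f) (p : Fin 4 → ℝ) :
    pd 1 (fun q => f ![q 0, q 1, q 2]) p = pd 1 f ![p 0, p 1, p 2] := by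
  rw [pd_comp f hf, L34_single1]; rfl

lemma pd_comp2 (f : (Fin 3 → ℝ) → ℝ) (hf : Differentiable ℝ f) (p : Fin 4 → ℝ) :
    pd 2 (fun q => f ![q 0, q 1, q 2]) p = pd 2 f ![p 0, p 1, p 2] := by
  rw [pd_comp f hf, L34_single2]; rfl

lemma pd_comp3 (f : (Fin 3 → ℝ) → ℝ) (hf : Differentiable ℝ f) (p : Fin 4 → ℝ) :
    pd 3 (fun q => f ![q 0, q 1, q 2]) p = 0 := by
  rw [pd_comp f hf, L34_single3]; simp

lemma contDiff_pd (u : (Fin 3 → ℝ) → ℝ) (hu : ContDiff ℝ (⊤ : ℕ∞) u) (i : Fin 3) :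
    ContDiff ℝ (⊤ : ℕ∞) (pd i u) := by
  have h : pd i u = fun q =>
      (ContinuousLinearMap.apply ℝ ℝ (Pi.single i 1)) (fderiv ℝ u q) := rfl
  rw [h]
  exact (ContinuousLinearMap.apply ℝ ℝ (Pi.single i 1)).contDiff.comp
    (hu.fderiv_right (m := (⊤ : ℕ∞)) (by exact_mod_cast le_top))

lemma pd_swap (u : (Fin 3 → ℝ) → ℝ) (hu : ContDiff ℝ (⊤ : ℕ∞) u) (i j : Fin 3) (q : Fin 3 → ℝ) :
    pd i (pd j u) q = pd j (pd i u) q := by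
  have hdu : Differentiable ℝ (fderiv ℝ u) :=
    ((hu.fderiv_right (by exact WithTop.coe_le_coe.mpr le_top) : ContDiff ℝ 1 (fderiv ℝ u))).differentiable one_ne_zero
  have key : ∀ k l : Fin 3,
      pd k (pd l u) q = fderiv ℝ (fderiv ℝ u) q (Pi.single k 1) (Pi.single l 1) := by
    intro k l
    have h : pd l u = ⇑(ContinuousLinearMap.apply ℝ ℝ (Pi.single l 1)) ∘ fderiv ℝ u := rfl
    rw [pd, h, fderiv_comp q (ContinuousLinearMap.apply ℝ ℝ
        (Pi.single l 1)).differentiableAt (hdu q), ContinuousLinearMap.fderiv]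
    simp
  rw [key, key]
  exact second_derivative_symmetric
    (fun y => (hu.differentiable (by simp) y).hasFDerivAt) (hdu q).hasFDerivAt _ _

end DKPaux

/-- The Lax pair of the dKP equation commutes on every solution. -/
theorem dKP_lax_pair_commutes
    (u : (Fin 3 → ℝ) → ℝ) (hu : ContDiff ℝ (⊤ : ℕ∞) u)
    (hdKP : ∀ q : Fin 3 → ℝ,
      pd 2 (pd 0 u) q = pd 0 (fun r => u r * pd 0 u r) q + pd 1 (pd 1 u) q)
    (X Y : (Fin 4 → ℝ) → (Fin 4 → ℝ))
    (hX : ∀ p : Fin 4 → ℝ, X p = ![-(p 3), 1, 0, pd 0 u ![p 0, p 1, p 2]])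
    (hY : ∀ p : Fin 4 → ℝ, Y p =
      ![-((p 3) ^ 2 + u ![p 0, p 1, p 2]), 0, 1,
        pd 0 u ![p 0, p 1, p 2] * p 3 + pd 1 u ![p 0, p 1, p 2]]) :
    ∀ p : Fin 4 → ℝ, lieBracket X Y p = 0 := by
  intro p
  have hud : Differentiable ℝ u := hu.differentiable (by simp)
  have hux : Differentiable ℝ (pd 0 u) := (DKPaux.contDiff_pd u hu 0).differentiable (by simp)
  have huy : Differentiable ℝ (pd 1 u) := (DKPaux.contDiff_pd u hu 1).differentiable (by simp)
  have hq3 := DKPaux.diff_proj3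
  have hcu : Differentiable ℝ (fun q : Fin 4 → ℝ => u ![q 0, q 1, q 2]) :=
    DKPaux.diff_comp u hud
  have hc0 : Differentiable ℝ (fun q : Fin 4 → ℝ => pd 0 u ![q 0, q 1, q 2]) :=
    DKPaux.diff_comp _ hux
  have hc1 : Differentiable ℝ (fun q : Fin 4 → ℝ => pd 1 u ![q 0, q 1, q 2]) :=
    DKPaux.diff_comp _ huy
  -- component functions
  have eX0 : (fun r => X r 0) = fun r : Fin 4 → ℝ => -(r 3) := by
    funext r; rw [hX r]; simp
  have eX1 : (fun r => X r 1) = fun _ : Fin 4 → ℝ => (1:ℝ) := by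
    funext r; rw [hX r]; simp
  have eX2 : (fun r => X r 2) = fun _ : Fin 4 → ℝ => (0:ℝ) := by
    funext r; rw [hX r]; simp
  have eX3 : (fun r => X r 3) = fun r : Fin 4 → ℝ => pd 0 u ![r 0, r 1, r 2] := by
    funext r; rw [hX r]; simp
  have eY0 : (fun r => Y r 0) =
      fun r : Fin 4 → ℝ => -(r 3 * r 3 + u ![r 0, r 1, r 2]) := by
    funext r; rw [hY r]; simp; ring
  have eY1 : (fun r => Y r 1) = fun _ : Fin 4 → ℝ => (0:ℝ) := by
    funext r; rw [hY r]; simp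
  have eY2 : (fun r => Y r 2) = fun _ : Fin 4 → ℝ => (1:ℝ) := by
    funext r; rw [hY r]; simp
  have eY3 : (fun r => Y r 3) =
      fun r : Fin 4 → ℝ => pd 0 u ![r 0, r 1, r 2] * r 3 + pd 1 u ![r 0, r 1, r 2] := by
    funext r; rw [hY r]; simp
  -- pd computations
  have pX0 : ∀ j : Fin 4, pd j (fun r : Fin 4 → ℝ => -(r 3)) p
      = -((Pi.single j (1:ℝ) : Fin 4 → ℝ) 3) := by
    intro j; rw [DKPaux.pd_neg, DKPaux.pd_proj]
  have pY0 : ∀ j : Fin 4, pd j (fun r : Fin 4 → ℝ => -(r 3 * r 3 + u ![r 0, r 1, r 2])) p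
      = -(((Pi.single j (1:ℝ) : Fin 4 → ℝ) 3) * p 3 + p 3 * ((Pi.single j (1:ℝ) : Fin 4 → ℝ) 3)
          + pd j (fun r : Fin 4 → ℝ => u ![r 0, r 1, r 2]) p) := by
    intro j
    rw [DKPaux.pd_neg, DKPaux.pd_add _ _ ((hq3 p).fun_mul (hq3 p)) (hcu p),
      DKPaux.pd_mul _ _ (hq3 p) (hq3 p), DKPaux.pd_proj]
  have pY3 : ∀ j : Fin 4,
      pd j (fun r : Fin 4 → ℝ => pd 0 u ![r 0, r 1, r 2] * r 3 + pd 1 u ![r 0, r 1, r 2]) p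
      = pd j (fun r : Fin 4 → ℝ => pd 0 u ![r 0, r 1, r 2]) p * p 3
        + pd 0 u ![p 0, p 1, p 2] * ((Pi.single j (1:ℝ) : Fin 4 → ℝ) 3)
        + pd j (fun r : Fin 4 → ℝ => pd 1 u ![r 0, r 1, r 2]) p := by
    intro j
    rw [DKPaux.pd_add _ _ ((hc0 p).fun_mul (hq3 p)) (hc1 p),
      DKPaux.pd_mul _ _ (hc0 p) (hq3 p), DKPaux.pd_proj]
  -- dKP expanded
  have hdKP' : pd 2 (pd 0 u) ![p 0, p 1, p 2]
      = pd 0 u ![p 0, p 1, p 2] * pd 0 u ![p 0, p 1, p 2]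
        + u ![p 0, p 1, p 2] * pd 0 (pd 0 u) ![p 0, p 1, p 2]
        + pd 1 (pd 1 u) ![p 0, p 1, p 2] := by
    rw [hdKP ![p 0, p 1, p 2],
      DKPaux.pd_mul u (pd 0 u) (hud _) (hux _) 0]
  have hswap01 : pd 0 (pd 1 u) ![p 0, p 1, p 2] = pd 1 (pd 0 u) ![p 0, p 1, p 2] :=
    DKPaux.pd_swap u hu 0 1 _
  have h0 : lieBracket X Y p 0 = 0 := by
    simp only [lieBracket, Fin.sum_univ_four]
    rw [eX0, eY0, hX p, hY p]
    simp only [pX0, pY0, DKPaux.pd_comp0 _ hud, DKPaux.pd_comp1 _ hud,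
      DKPaux.pd_comp2 _ hud, DKPaux.pd_comp3 _ hud]
    simp [Pi.single_apply]
    ring
  have h1 : lieBracket X Y p 1 = 0 := by
    simp only [lieBracket, Fin.sum_univ_four]
    rw [eX1, eY1]
    simp only [DKPaux.pd_const]
    simp
  have h2 : lieBracket X Y p 2 = 0 := by
    simp only [lieBracket, Fin.sum_univ_four]
    rw [eX2, eY2]
    simp only [DKPaux.pd_const]
    simp
  have h3 : lieBracket X Y p 3 = 0 := by
    simp only [lieBracket, Fin.sum_univ_four]
    rw [eX3, eY3, hX p, hY p]
    simp only [pY3, DKPaux.pd_comp0 _ hux, DKPaux.pd_comp1 _ hux, DKPaux.pd_comp2 _ hux,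
      DKPaux.pd_comp3 _ hux, DKPaux.pd_comp0 _ huy, DKPaux.pd_comp1 _ huy,
      DKPaux.pd_comp2 _ huy, DKPaux.pd_comp3 _ huy]
    simp [Pi.single_apply]
    rw [hdKP', hswap01]
    ring
  funext i
  fin_cases i
  · exact h0
  · exact h1
  · exact h2
  · exact h3
end

section
/- Let u : ℝ³ → ℝ be a smooth function of (x, y, t) satisfying the Boyer–Finley equation u_{xx} + u_{yy} = (e^u)_{tt}. Then the vector fields X = ∂_y − e^{u/2} sin λ ∂_t − (1/2)(u_x + e^{u/2} u_t cos λ) ∂_λ and Y = ∂_x − e^{u/2} cos λ ∂_t + (1/2)(u_y + e^{u/2} u_t sin λ) ∂_λ on ℝ⁴ with coordinates (x, y, t, λ) commute. -/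
noncomputable def Pr : (Fin 4 → ℝ) →L[ℝ] (Fin 3 → ℝ) :=
  ContinuousLinearMap.pi fun i : Fin 3 => ContinuousLinearMap.proj i.castSucc

lemma Pr_apply (p : Fin 4 → ℝ) : Pr p = ![p 0, p 1, p 2] := by
  funext i; fin_cases i <;> rfl

lemma Pr_single0 : Pr (Pi.single (0 : Fin 4) 1) = Pi.single (0 : Fin 3) 1 := by
  funext i; fin_cases i <;> simp [Pr, Pi.single_apply, Fin.castSucc, Fin.castAdd, Fin.castLE, Fin.ext_iff] <;> decide

lemma Pr_single1 : Pr (Pi.single (1 : Fin 4) 1) = Pi.single (1 : Fin 3) 1 := by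
  funext i; fin_cases i <;> simp [Pr, Pi.single_apply, Fin.castSucc, Fin.castAdd, Fin.castLE, Fin.ext_iff] <;> decide

lemma Pr_single2 : Pr (Pi.single (2 : Fin 4) 1) = Pi.single (2 : Fin 3) 1 := by
  funext i; fin_cases i <;> simp [Pr, Pi.single_apply, Fin.castSucc, Fin.castAdd, Fin.castLE, Fin.ext_iff] <;> decide

lemma Pr_single3 : Pr (Pi.single (3 : Fin 4) 1) = 0 := by
  funext i; fin_cases i <;> simp [Pr, Pi.single_apply, Fin.castSucc, Fin.castAdd, Fin.castLE, Fin.ext_iff] <;> decide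

lemma pd_eq {n : ℕ} {f : (Fin n → ℝ) → ℝ} {f' : (Fin n → ℝ) →L[ℝ] ℝ} {p : Fin n → ℝ}
    (hf : HasFDerivAt f f' p) (j : Fin n) : pd j f p = f' (Pi.single j 1) := by
  rw [pd, hf.fderiv]

section
variable {u : (Fin 3 → ℝ) → ℝ} (hu : ContDiff ℝ (⊤ : ℕ∞) u)
include hu

lemma hUlem (p : Fin 4 → ℝ) :
    HasFDerivAt (fun p : Fin 4 → ℝ => u (Pr p)) ((fderiv ℝ u (Pr p)).comp Pr) p :=
  ((hu.differentiable (by simp) (Pr p)).hasFDerivAt).comp p Pr.hasFDerivAt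

lemma hFlem (q : Fin 3 → ℝ) :
    HasFDerivAt (fderiv ℝ u) (fderiv ℝ (fderiv ℝ u) q) q :=
  (((hu.fderiv_right (m := 1) (WithTop.coe_le_coe.mpr le_top)).differentiable (by simp)) q).hasFDerivAt

lemma hVq (i : Fin 3) (q : Fin 3 → ℝ) :
    HasFDerivAt (pd i u)
      ((fderiv ℝ (fderiv ℝ u) q).flip (Pi.single i 1)) q := by
  have h := (hFlem hu q).clm_apply (hasFDerivAt_const (Pi.single i 1) q)
  simp at h; exact h

lemma hVlem (i : Fin 3) (p : Fin 4 → ℝ) :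
    HasFDerivAt (fun p : Fin 4 → ℝ => pd i u (Pr p))
      (((fderiv ℝ (fderiv ℝ u) (Pr p)).flip (Pi.single i 1)).comp Pr) p :=
  (hVq hu i (Pr p)).comp p Pr.hasFDerivAt

lemma hElem (p : Fin 4 → ℝ) :
    HasFDerivAt (fun p : Fin 4 → ℝ => Real.exp (u (Pr p) / 2))
      (Real.exp (u (Pr p) / 2) • ((2:ℝ)⁻¹ • ((fderiv ℝ u (Pr p)).comp Pr))) p := by
  have h2 : HasFDerivAt (fun p : Fin 4 → ℝ => u (Pr p) / 2)
      ((2:ℝ)⁻¹ • ((fderiv ℝ u (Pr p)).comp Pr)) p := by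
    simpa [div_eq_inv_mul] using (hUlem hu p).const_mul (2:ℝ)⁻¹
  exact h2.exp

end

lemma hsinlem (p : Fin 4 → ℝ) :
    HasFDerivAt (fun p : Fin 4 → ℝ => Real.sin (p 3))
      (Real.cos (p 3) • (ContinuousLinearMap.proj 3 : (Fin 4 → ℝ) →L[ℝ] ℝ)) p :=
  (ContinuousLinearMap.proj 3 : (Fin 4 → ℝ) →L[ℝ] ℝ).hasFDerivAt.sin

lemma hcoslem (p : Fin 4 → ℝ) :
    HasFDerivAt (fun p : Fin 4 → ℝ => Real.cos (p 3))
      (-Real.sin (p 3) • (ContinuousLinearMap.proj 3 : (Fin 4 → ℝ) →L[ℝ] ℝ)) p :=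
  (ContinuousLinearMap.proj 3 : (Fin 4 → ℝ) →L[ℝ] ℝ).hasFDerivAt.cos


/-- The Lax pair of the Boyer–Finley equation commutes on every solution. -/
theorem BF_lax_pair_commutes
    (u : (Fin 3 → ℝ) → ℝ) (hu : ContDiff ℝ (⊤ : ℕ∞) u)
    (hBF : ∀ q : Fin 3 → ℝ,
      pd 0 (pd 0 u) q + pd 1 (pd 1 u) q = pd 2 (pd 2 (fun r => Real.exp (u r))) q)
    (X Y : (Fin 4 → ℝ) → (Fin 4 → ℝ))
    (hX : ∀ p : Fin 4 → ℝ, X p =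
      ![0, 1, -(Real.exp (u ![p 0, p 1, p 2] / 2) * Real.sin (p 3)),
        -(1 / 2) * (pd 0 u ![p 0, p 1, p 2]
          + Real.exp (u ![p 0, p 1, p 2] / 2) * pd 2 u ![p 0, p 1, p 2] * Real.cos (p 3))])
    (hY : ∀ p : Fin 4 → ℝ, Y p =
      ![1, 0, -(Real.exp (u ![p 0, p 1, p 2] / 2) * Real.cos (p 3)),
        (1 / 2) * (pd 1 u ![p 0, p 1, p 2]
          + Real.exp (u ![p 0, p 1, p 2] / 2) * pd 2 u ![p 0, p 1, p 2] * Real.sin (p 3))]) :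
    ∀ p : Fin 4 → ℝ, lieBracket X Y p = 0 := by
  intro p
  have hfX0 : (fun r : Fin 4 → ℝ => X r 0) = fun _ => (0:ℝ) := by
    funext r; rw [hX r]; rfl
  have hfX1 : (fun r : Fin 4 → ℝ => X r 1) = fun _ => (1:ℝ) := by
    funext r; rw [hX r]; rfl
  have hfY0 : (fun r : Fin 4 → ℝ => Y r 0) = fun _ => (1:ℝ) := by
    funext r; rw [hY r]; rfl
  have hfY1 : (fun r : Fin 4 → ℝ => Y r 1) = fun _ => (0:ℝ) := by
    funext r; rw [hY r]; rfl
  have hfX2 : (fun r : Fin 4 → ℝ => X r 2)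
      = fun r => -(Real.exp (u (Pr r) / 2) * Real.sin (r 3)) := by
    funext r; rw [hX r, Pr_apply]; rfl
  have hfY2 : (fun r : Fin 4 → ℝ => Y r 2)
      = fun r => -(Real.exp (u (Pr r) / 2) * Real.cos (r 3)) := by
    funext r; rw [hY r, Pr_apply]; rfl
  have hfX3 : (fun r : Fin 4 → ℝ => X r 3)
      = fun r => -(1 / 2) * (pd 0 u (Pr r)
          + Real.exp (u (Pr r) / 2) * pd 2 u (Pr r) * Real.cos (r 3)) := by
    funext r; rw [hX r, Pr_apply]; rfl
  have hfY3 : (fun r : Fin 4 → ℝ => Y r 3)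
      = fun r => (1 / 2) * (pd 1 u (Pr r)
          + Real.exp (u (Pr r) / 2) * pd 2 u (Pr r) * Real.sin (r 3)) := by
    funext r; rw [hY r, Pr_apply]; rfl
  have DX2 := ((hElem hu p).fun_mul (hsinlem p)).fun_neg
  have DY2 := ((hElem hu p).fun_mul (hcoslem p)).fun_neg
  have DX3 := ((hVlem hu 0 p).fun_add (((hElem hu p).fun_mul (hVlem hu 2 p)).fun_mul (hcoslem p))).const_mul (-(1/2) : ℝ)
  have DY3 := ((hVlem hu 1 p).fun_add (((hElem hu p).fun_mul (hVlem hu 2 p)).fun_mul (hsinlem p))).const_mul ((1/2) : ℝ)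
  have pdc : ∀ (c : ℝ) (j : Fin 4), pd j (fun _ : Fin 4 → ℝ => c) p = 0 := by
    intro c j; rw [pd, fderiv_fun_const]; simp
  have vX0 : X p 0 = 0 := congrFun hfX0 p
  have vX1 : X p 1 = 1 := congrFun hfX1 p
  have vX2 := congrFun hfX2 p
  have vX3 := congrFun hfX3 p
  have vY0 : Y p 0 = 1 := congrFun hfY0 p
  have vY1 : Y p 1 = 0 := congrFun hfY1 p
  have vY2 := congrFun hfY2 p
  have vY3 := congrFun hfY3 p
  funext i
  fin_cases i
  · show lieBracket X Y p 0 = 0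
    simp only [lieBracket, Fin.sum_univ_four, Pi.zero_apply]
    rw [hfY0, hfX0]; simp only [pdc]; ring
  · show lieBracket X Y p 1 = 0
    simp only [lieBracket, Fin.sum_univ_four, Pi.zero_apply]
    rw [hfY1, hfX1]; simp only [pdc]; ring
  · show lieBracket X Y p 2 = 0
    simp only [lieBracket, Fin.sum_univ_four, Pi.zero_apply]
    rw [hfY2, hfX2]
    simp only [pd_eq DY2, pd_eq DX2]
    rw [vX0, vX1, vX2, vX3, vY0, vY1, vY2, vY3]
    simp only [ContinuousLinearMap.neg_apply, ContinuousLinearMap.add_apply,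
      ContinuousLinearMap.smul_apply, ContinuousLinearMap.coe_comp', Function.comp_apply,
      ContinuousLinearMap.flip_apply, ContinuousLinearMap.proj_apply,
      Pr_single0, Pr_single1, Pr_single2, Pr_single3, map_zero,
      ContinuousLinearMap.zero_apply, smul_eq_mul, pd]
    have e03 : (Pi.single (0:Fin 4) (1:ℝ) : Fin 4 → ℝ) 3 = 0 := by norm_num [Pi.single_apply, Fin.ext_iff]
    have e13 : (Pi.single (1:Fin 4) (1:ℝ) : Fin 4 → ℝ) 3 = 0 := by norm_num [Pi.single_apply, Fin.ext_iff]
    have e23 : (Pi.single (2:Fin 4) (1:ℝ) : Fin 4 → ℝ) 3 = 0 := by norm_num [Pi.single_apply, Fin.ext_iff]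
    have e33 : (Pi.single (3:Fin 4) (1:ℝ) : Fin 4 → ℝ) 3 = 1 := by simp
    simp only [e03, e13, e23, e33, mul_zero, mul_one, zero_mul, one_mul, add_zero, zero_add]
    ring
  · show lieBracket X Y p 3 = 0
    have hsym : ∀ a b : Fin 3, fderiv ℝ (fderiv ℝ u) (Pr p) (Pi.single a 1) (Pi.single b 1)
        = fderiv ℝ (fderiv ℝ u) (Pr p) (Pi.single b 1) (Pi.single a 1) := fun a b =>
      second_derivative_symmetric (fun y => ((hu.differentiable (by simp)) y).hasFDerivAt)
        (hFlem hu (Pr p)) _ _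
    have hexp_pt : ∀ r : Fin 3 → ℝ, HasFDerivAt (fun s => Real.exp (u s))
        (Real.exp (u r) • fderiv ℝ u r) r := fun r =>
      ((hu.differentiable (by simp) r).hasFDerivAt).exp
    have h1 : pd 2 (fun r => Real.exp (u r)) = fun r => Real.exp (u r) * pd 2 u r := by
      funext r; rw [pd_eq (hexp_pt r)]; simp [pd]
    have hprod := (hexp_pt (Pr p)).fun_mul (hVq hu 2 (Pr p))
    have hBF3 := hBF (Pr p)
    rw [h1, pd_eq hprod, pd_eq (hVq hu 0 (Pr p)), pd_eq (hVq hu 1 (Pr p))] at hBF3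
    simp only [ContinuousLinearMap.add_apply, ContinuousLinearMap.smul_apply,
      ContinuousLinearMap.flip_apply, smul_eq_mul, pd] at hBF3
    have hEE : Real.exp (u (Pr p) / 2) * Real.exp (u (Pr p) / 2) = Real.exp (u (Pr p)) := by
      rw [← Real.exp_add, add_halves]
    have hsc : Real.sin (p 3) ^ 2 + Real.cos (p 3) ^ 2 = 1 := Real.sin_sq_add_cos_sq _
    simp only [lieBracket, Fin.sum_univ_four]
    rw [hfY3, hfX3]
    simp only [pd_eq DY3, pd_eq DX3]
    rw [vX0, vX1, vX2, vX3, vY0, vY1, vY2, vY3]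
    simp only [ContinuousLinearMap.neg_apply, ContinuousLinearMap.add_apply,
      ContinuousLinearMap.smul_apply, ContinuousLinearMap.coe_comp', Function.comp_apply,
      ContinuousLinearMap.flip_apply, ContinuousLinearMap.proj_apply,
      Pr_single0, Pr_single1, Pr_single2, Pr_single3, map_zero,
      ContinuousLinearMap.zero_apply, smul_eq_mul, pd]
    have e03 : (Pi.single (0:Fin 4) (1:ℝ) : Fin 4 → ℝ) 3 = 0 := by norm_num [Pi.single_apply, Fin.ext_iff]
    have e13 : (Pi.single (1:Fin 4) (1:ℝ) : Fin 4 → ℝ) 3 = 0 := by norm_num [Pi.single_apply, Fin.ext_iff]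
    have e23 : (Pi.single (2:Fin 4) (1:ℝ) : Fin 4 → ℝ) 3 = 0 := by norm_num [Pi.single_apply, Fin.ext_iff]
    have e33 : (Pi.single (3:Fin 4) (1:ℝ) : Fin 4 → ℝ) 3 = 1 := by simp
    simp only [e03, e13, e23, e33, mul_zero, mul_one, zero_mul, one_mul, add_zero, zero_add]
    rw [hsym 2 1, hsym 2 0]
    linear_combination (1/2) * hBF3
      + (-(1/2)*(Real.exp (u (Pr p) / 2) * Real.exp (u (Pr p) / 2))
            * (fderiv ℝ (fderiv ℝ u) (Pr p) (Pi.single 2 1) (Pi.single 2 1))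
         - (1/2)*(Real.exp (u (Pr p) / 2) * Real.exp (u (Pr p) / 2))
            * (fderiv ℝ u (Pr p) (Pi.single 2 1))^2) * hsc
      + (-(1/2)*(fderiv ℝ (fderiv ℝ u) (Pr p) (Pi.single 2 1) (Pi.single 2 1))
         - (1/2)*(fderiv ℝ u (Pr p) (Pi.single 2 1))^2) * hEE
end

section
/- Let u : ℝ³ → ℝ be a smooth function of (x, y, t) satisfying (e^u − u)_{xx} + 2u_{xy} + (e^u)_{tt} = 0. Then the vector fields X = ∂_t − λ ∂_x + (λ² + 1) u_x ∂_λ and Y = ∂_y + (1/2)(e^u(λ² + 1) − 1) ∂_x − (1/2) e^u (u_t + λ u_x)(λ² + 1) ∂_λ on ℝ⁴ with coordinates (x, y, t, λ) commute. -/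
section helpers
variable {n : ℕ} {f g : (Fin n → ℝ) → ℝ} {p : Fin n → ℝ} {j : Fin n}

lemma pd_const (c : ℝ) : pd j (fun _ => c) p = 0 := by simp [pd]

lemma pd_add (hf : DifferentiableAt ℝ f p) (hg : DifferentiableAt ℝ g p) :
    pd j (fun q => f q + g q) p = pd j f p + pd j g p := by
  simp [pd, fderiv_fun_add hf hg]

lemma pd_sub (hf : DifferentiableAt ℝ f p) (hg : DifferentiableAt ℝ g p) :
    pd j (fun q => f q - g q) p = pd j f p - pd j g p := by
  simp [pd, fderiv_fun_sub hf hg]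

lemma pd_mul (hf : DifferentiableAt ℝ f p) (hg : DifferentiableAt ℝ g p) :
    pd j (fun q => f q * g q) p = f p * pd j g p + g p * pd j f p := by
  simp [pd, fderiv_fun_mul hf hg]

lemma pd_neg : pd j (fun q => -f q) p = -pd j f p := by
  simp [pd, fderiv_neg]

lemma pd_exp (hf : DifferentiableAt ℝ f p) :
    pd j (fun q => Real.exp (f q)) p = Real.exp (f p) * pd j f p := by
  simp [pd, fderiv_exp hf]

lemma pd_coord (i : Fin n) : pd j (fun q => q i) p = if i = j then 1 else 0 := by
  have h : (fun q : Fin n → ℝ => q i) = fun q => ContinuousLinearMap.proj (R := ℝ) (φ := fun _ : Fin n => ℝ) i q := rfl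
  rw [pd, h, ContinuousLinearMap.fderiv]
  simp [Pi.single_apply]


end helpers

noncomputable def L34 : (Fin 4 → ℝ) →L[ℝ] (Fin 3 → ℝ) :=
  ContinuousLinearMap.pi fun i => ContinuousLinearMap.proj i.castSucc

lemma L34_apply (q : Fin 4 → ℝ) : L34 q = ![q 0, q 1, q 2] := by
  funext i; fin_cases i <;> rfl

lemma L34_single0 : L34 (Pi.single (0 : Fin 4) 1) = Pi.single (0 : Fin 3) 1 := by
  funext i; fin_cases i <;> simp [L34_apply]
lemma L34_single1 : L34 (Pi.single (1 : Fin 4) 1) = Pi.single (1 : Fin 3) 1 := by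
  funext i; fin_cases i <;> simp [L34_apply]
lemma L34_single2 : L34 (Pi.single (2 : Fin 4) 1) = Pi.single (2 : Fin 3) 1 := by
  funext i; fin_cases i <;> simp [L34_apply]
lemma L34_single3 : L34 (Pi.single (3 : Fin 4) 1) = 0 := by
  funext i; fin_cases i <;> simp [L34_apply]

lemma pd_comp_L34 {f : (Fin 3 → ℝ) → ℝ} {p : Fin 4 → ℝ} (hf : DifferentiableAt ℝ f (L34 p))
    (j : Fin 4) :
    pd j (fun q => f (L34 q)) p = fderiv ℝ f (L34 p) (L34 (Pi.single j 1)) := by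
  have h : (fun q => f (L34 q)) = f ∘ L34 := rfl
  rw [pd, h, fderiv_comp p hf L34.differentiableAt, L34.fderiv]
  rfl

lemma pd_comp_L34_0 {f : (Fin 3 → ℝ) → ℝ} {p : Fin 4 → ℝ} (hf : DifferentiableAt ℝ f (L34 p)) :
    pd 0 (fun q => f (L34 q)) p = pd 0 f (L34 p) := by
  rw [pd_comp_L34 hf, L34_single0]; rfl
lemma pd_comp_L34_1 {f : (Fin 3 → ℝ) → ℝ} {p : Fin 4 → ℝ} (hf : DifferentiableAt ℝ f (L34 p)) :
    pd 1 (fun q => f (L34 q)) p = pd 1 f (L34 p) := by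
  rw [pd_comp_L34 hf, L34_single1]; rfl
lemma pd_comp_L34_2 {f : (Fin 3 → ℝ) → ℝ} {p : Fin 4 → ℝ} (hf : DifferentiableAt ℝ f (L34 p)) :
    pd 2 (fun q => f (L34 q)) p = pd 2 f (L34 p) := by
  rw [pd_comp_L34 hf, L34_single2]; rfl
lemma pd_comp_L34_3 {f : (Fin 3 → ℝ) → ℝ} {p : Fin 4 → ℝ} (hf : DifferentiableAt ℝ f (L34 p)) :
    pd 3 (fun q => f (L34 q)) p = 0 := by
  rw [pd_comp_L34 hf, L34_single3]; simp

lemma pd_contDiff {n : ℕ} {f : (Fin n → ℝ) → ℝ} (hf : ContDiff ℝ (⊤ : ℕ∞) f) (i : Fin n) :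
    ContDiff ℝ (⊤ : ℕ∞) (pd i f) := by
  have : ContDiff ℝ (⊤ : ℕ∞) (fderiv ℝ f) := hf.fderiv_right (by simp)
  exact this.clm_apply contDiff_const

lemma pd_comm {n : ℕ} {f : (Fin n → ℝ) → ℝ} (hf : ContDiff ℝ (⊤ : ℕ∞) f) (i j : Fin n)
    (p : Fin n → ℝ) : pd i (pd j f) p = pd j (pd i f) p := by
  have hf' : ∀ y, HasFDerivAt f (fderiv ℝ f y) y :=
    fun y => (hf.differentiable (by simp) y).hasFDerivAt
  have hd : DifferentiableAt ℝ (fderiv ℝ f) p :=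
    ((hf.fderiv_right (m := (⊤ : ℕ∞)) (by simp)).differentiable (by simp)) p
  have hf'' : HasFDerivAt (fderiv ℝ f) (fderiv ℝ (fderiv ℝ f) p) p := hd.hasFDerivAt
  have key : ∀ v w, fderiv ℝ (fun r => fderiv ℝ f r v) p w
      = fderiv ℝ (fderiv ℝ f) p w v := by
    intro v w
    have h := hd.clm_apply (differentiableAt_const v)
    rw [fderiv_clm_apply hd (differentiableAt_const v)]
    simp
  have hsymm := second_derivative_symmetric hf' hf'' (Pi.single j 1) (Pi.single i 1)
  show fderiv ℝ (fun r => fderiv ℝ f r (Pi.single j 1)) p (Pi.single i 1)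
      = fderiv ℝ (fun r => fderiv ℝ f r (Pi.single i 1)) p (Pi.single j 1)
  rw [key, key]
  exact hsymm.symm

lemma fin4_mk2 (h : 2 < 4) : (⟨2, h⟩ : Fin 4) = 2 := rfl
lemma fin4_mk3 (h : 3 < 4) : (⟨3, h⟩ : Fin 4) = 3 := rfl


/-- The Lax pair of the third integrable type-I equation commutes on every solution. -/
theorem eq3_lax_pair_commutes
    (u : (Fin 3 → ℝ) → ℝ) (hu : ContDiff ℝ (⊤ : ℕ∞) u)
    (heq : ∀ q : Fin 3 → ℝ,
      pd 0 (pd 0 (fun r => Real.exp (u r) - u r)) q + 2 * pd 1 (pd 0 u) q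
        + pd 2 (pd 2 (fun r => Real.exp (u r))) q = 0)
    (X Y : (Fin 4 → ℝ) → (Fin 4 → ℝ))
    (hX : ∀ p : Fin 4 → ℝ, X p =
      ![-(p 3), 0, 1, ((p 3) ^ 2 + 1) * pd 0 u ![p 0, p 1, p 2]])
    (hY : ∀ p : Fin 4 → ℝ, Y p =
      ![(1 / 2) * (Real.exp (u ![p 0, p 1, p 2]) * ((p 3) ^ 2 + 1) - 1), 1, 0,
        -(1 / 2) * Real.exp (u ![p 0, p 1, p 2])
          * (pd 2 u ![p 0, p 1, p 2] + p 3 * pd 0 u ![p 0, p 1, p 2]) * ((p 3) ^ 2 + 1)]) :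
    ∀ p : Fin 4 → ℝ, lieBracket X Y p = 0 := by
  intro p
  have hud : Differentiable ℝ u := hu.differentiable (by simp)
  have hda : Differentiable ℝ (pd 0 u) := (pd_contDiff hu 0).differentiable (by simp)
  have hdc : Differentiable ℝ (pd 2 u) := (pd_contDiff hu 2).differentiable (by simp)
  set m : Fin 3 → ℝ := L34 p with hm
  -- the PDE at m, in expanded form
  have h1 : pd 0 (fun r => Real.exp (u r) - u r)
      = fun r => Real.exp (u r) * pd 0 u r - pd 0 u r := by
    funext r
    rw [show (fun r => Real.exp (u r) - u r) = fun r => Real.exp (u r) - u r from rfl]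
    rw [pd_sub (by fun_prop) (by fun_prop), pd_exp (by fun_prop)]
  have h3 : pd 2 (fun r => Real.exp (u r)) = fun r => Real.exp (u r) * pd 2 u r := by
    funext r
    rw [pd_exp (by fun_prop)]
  have heqm := heq m
  rw [h1, h3] at heqm
  rw [show pd 0 (fun r => Real.exp (u r) * pd 0 u r - pd 0 u r) m
        = Real.exp (u m) * pd 0 (pd 0 u) m + pd 0 u m * (Real.exp (u m) * pd 0 u m)
          - pd 0 (pd 0 u) m by
      rw [pd_sub (by fun_prop) (by fun_prop), pd_mul (by fun_prop) (by fun_prop),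
        pd_exp (by fun_prop)],
    show pd 2 (fun r => Real.exp (u r) * pd 2 u r) m
        = Real.exp (u m) * pd 2 (pd 2 u) m + pd 2 u m * (Real.exp (u m) * pd 2 u m) by
      rw [pd_mul (by fun_prop) (by fun_prop), pd_exp (by fun_prop)]] at heqm
  -- Schwarz
  have hsch : pd 0 (pd 2 u) m = pd 2 (pd 0 u) m := pd_comm hu 0 2 m
  -- rewrite X, Y with L34
  have hX' : ∀ q : Fin 4 → ℝ, X q =
      ![-(q 3), 0, 1, (q 3 * q 3 + 1) * pd 0 u (L34 q)] := by
    intro q; rw [hX q, ← L34_apply]; ring_nf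
  have hY' : ∀ q : Fin 4 → ℝ, Y q =
      ![(1 / 2) * (Real.exp (u (L34 q)) * (q 3 * q 3 + 1) - 1), 1, 0,
        -(1 / 2) * Real.exp (u (L34 q))
          * (pd 2 u (L34 q) + q 3 * pd 0 u (L34 q)) * (q 3 * q 3 + 1)] := by
    intro q; rw [hY q, ← L34_apply]; ring_nf
  funext i
  fin_cases i <;>
  · simp (disch := fun_prop) only [lieBracket, Fin.sum_univ_four, hX', hY',
      Fin.mk_zero, Fin.mk_one, fin4_mk2, fin4_mk3,
      Matrix.cons_val_zero, Matrix.cons_val_one, Matrix.head_cons,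
      Matrix.cons_val_two, Matrix.tail_cons, Matrix.cons_val_three,
      pd_mul, pd_add, pd_sub, pd_neg, pd_exp, pd_const, pd_coord,
      pd_comp_L34_0, pd_comp_L34_1, pd_comp_L34_2, pd_comp_L34_3,
      Pi.zero_apply]
    norm_num [← hm, (by decide : (3:Fin 4) ≠ 0), (by decide : (3:Fin 4) ≠ 1),
      (by decide : (3:Fin 4) ≠ 2)]
    try ring
    try rw [hsch]
    try linear_combination (-(1/2) * (p 3 * p 3 + 1)) * heqm
end

section
/- Let p, q : ℝ³ → ℝ be smooth functions of (x, y, t) satisfying the elliptic systems p_y = 4p p_x − 2q q_x, q_y = 2q p_x + 4p q_x, p_t = (16p² − 8q²) p_x − 16pq q_x, q_t = 16pq p_x + (16p² − 8q²) q_x. Then u := −4q² and w := −16pq² satisfy the dKP system u_t − u u_x = w_y and u_y = w_x. -/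
lemma pd_u (Q : (Fin 3 → ℝ) → ℝ) (hQ : ContDiff ℝ (⊤ : ℕ∞) Q) (i : Fin 3) (r : Fin 3 → ℝ) :
    pd i (fun s => -4 * (Q s) ^ 2) r = -8 * Q r * pd i Q r := by
  have hq : HasFDerivAt Q (fderiv ℝ Q r) r :=
    (hQ.differentiable (by simp) r).hasFDerivAt
  have h : HasFDerivAt (fun s => -4 * (Q s * Q s))
      ((-4 : ℝ) • (Q r • fderiv ℝ Q r + Q r • fderiv ℝ Q r)) r := (hq.mul hq).const_mul (-4)
  have he : (fun s => -4 * (Q s) ^ 2) = fun s => -4 * (Q s * Q s) := by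
    funext s; ring
  unfold pd
  rw [he, h.fderiv]
  simp
  ring

lemma pd_w (P Q : (Fin 3 → ℝ) → ℝ) (hP : ContDiff ℝ (⊤ : ℕ∞) P) (hQ : ContDiff ℝ (⊤ : ℕ∞) Q)
    (i : Fin 3) (r : Fin 3 → ℝ) :
    pd i (fun s => -16 * P s * (Q s) ^ 2) r
      = -16 * (pd i P r * (Q r) ^ 2 + 2 * P r * Q r * pd i Q r) := by
  have hq : HasFDerivAt Q (fderiv ℝ Q r) r :=
    (hQ.differentiable (by simp) r).hasFDerivAt
  have hp : HasFDerivAt P (fderiv ℝ P r) r :=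
    (hP.differentiable (by simp) r).hasFDerivAt
  have h : HasFDerivAt (fun s => -16 * P s * (Q s * Q s))
      ((-16 * P r) • (Q r • fderiv ℝ Q r + Q r • fderiv ℝ Q r)
        + (Q r * Q r) • ((-16 : ℝ) • fderiv ℝ P r)) r :=
    (hp.const_mul (-16)).mul (hq.mul hq)
  have he : (fun s => -16 * P s * (Q s) ^ 2) = fun s => -16 * P s * (Q s * Q s) := by
    funext s; ring
  unfold pd
  rw [he, h.fderiv]
  simp
  ring

/-- The two-component elliptic reduction produces real solutions of the
first-order form of the dKP equation. -/
theorem elliptic_reduction_of_dKP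
    (P Q : (Fin 3 → ℝ) → ℝ) (hP : ContDiff ℝ (⊤ : ℕ∞) P) (hQ : ContDiff ℝ (⊤ : ℕ∞) Q)
    (h1 : ∀ r : Fin 3 → ℝ, pd 1 P r = 4 * P r * pd 0 P r - 2 * Q r * pd 0 Q r)
    (h2 : ∀ r : Fin 3 → ℝ, pd 1 Q r = 2 * Q r * pd 0 P r + 4 * P r * pd 0 Q r)
    (h3 : ∀ r : Fin 3 → ℝ,
      pd 2 P r = (16 * (P r) ^ 2 - 8 * (Q r) ^ 2) * pd 0 P r - 16 * P r * Q r * pd 0 Q r)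
    (h4 : ∀ r : Fin 3 → ℝ,
      pd 2 Q r = 16 * P r * Q r * pd 0 P r + (16 * (P r) ^ 2 - 8 * (Q r) ^ 2) * pd 0 Q r) :
    (∀ r : Fin 3 → ℝ,
      pd 2 (fun s => -4 * (Q s) ^ 2) r
        - (-4 * (Q r) ^ 2) * pd 0 (fun s => -4 * (Q s) ^ 2) r
        = pd 1 (fun s => -16 * P s * (Q s) ^ 2) r) ∧
    (∀ r : Fin 3 → ℝ,
      pd 1 (fun s => -4 * (Q s) ^ 2) r = pd 0 (fun s => -16 * P s * (Q s) ^ 2) r) := by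
  constructor
  · intro r
    rw [pd_u Q hQ, pd_u Q hQ, pd_w P Q hP hQ, h1 r, h2 r, h4 r]; ring
  · intro r
    rw [pd_u Q hQ, pd_w P Q hP hQ, h2 r]; ring
end
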